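/- Let θ > 0 and T ≥ 0, and let X be a random variable with the Poisson distribution of mean λ = θT. Then the variance of the Girsanov sensitivity estimator s = (1/θ)·X·(X − θT) is Var(s) = (T + 4θT² + θ²T³)/θ; equivalently, E[(X(X − θT)/θ − T)²] = (T + 4θT² + θ²T³)/θ. -/

import Mathlib

/-! The falling factorials are the natural moments of the Poisson law: for `X ~ Poisson(λ)`,
`E[X(X-1)⋯(X-k+1)] = λ^k`, because shifting the exponential series by `k` turns
`∑ λⁿ/n! · n!/(n-k)!` into `λ^k e^λ`. With `λ = θT` the centred estimator is
`(X(X - λ) - λ)/θ`, and `(X(X - λ) - λ)²` is a combination of falling factorials of degree at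
most four, whose expectation collapses to `λ + 4λ² + λ³`. -/

open MeasureTheory ProbabilityTheory Real Finset
open scoped Nat NNReal

theorem Nat.cast_descFactorial_eq_prod_range {R : Type*} [CommRing R] (n k : ℕ) :
    (n.descFactorial k : R) = ∏ j ∈ range k, ((n : R) - j) := by
  rw [← descPochhammer_eval_eq_descFactorial, descPochhammer_eval_eq_prod_range]

theorem hasSum_pow_div_factorial_mul_descFactorial (x : ℝ) (k : ℕ) :
    HasSum (fun n : ℕ ↦ x ^ n / n ! * n.descFactorial k) (x ^ k * exp x) := by
  have hshift (m : ℕ) : x ^ (m + k) / (m + k)! * (m + k).descFactorial k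
      = x ^ k * (x ^ m / m !) := by
    rw [← Nat.factorial_mul_descFactorial (Nat.le_add_left k m), Nat.add_sub_cancel]
    push_cast
    field_simp
    ring
  have hvanish : ∑ n ∈ range k, x ^ n / n ! * n.descFactorial k = 0 :=
    sum_eq_zero fun n hn ↦ by simp [Nat.descFactorial_of_lt (mem_range.mp hn)]
  rw [← hasSum_nat_add_iff' k, hvanish, sub_zero]
  simp_rw [hshift]
  exact (exp_eq_exp_ℝ ▸ NormedSpace.expSeries_div_hasSum_exp x).mul_left _

theorem integral_sq_mul_sub_sub_poissonMeasure (r : ℝ≥0) :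
    ∫ n : ℕ, ((n : ℝ) * (n - r) - r) ^ 2 ∂Po(r) = r + 4 * r ^ 2 + r ^ 3 := by
  set x : ℝ := (r : ℝ)
  have hexpand (n : ℕ) : ((n : ℝ) * (n - x) - x) ^ 2 = n.descFactorial 4
      + (6 - 2 * x) * n.descFactorial 3 + (x ^ 2 - 8 * x + 7) * n.descFactorial 2
      + (3 * x ^ 2 - 4 * x + 1) * n.descFactorial 1 + x ^ 2 * n.descFactorial 0 := by
    simp only [Nat.cast_descFactorial_eq_prod_range, prod_range_succ, prod_range_zero]
    push_cast
    ring
  have hmoments := (((((hasSum_pow_div_factorial_mul_descFactorial x 4).add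
      ((hasSum_pow_div_factorial_mul_descFactorial x 3).mul_left (6 - 2 * x))).add
      ((hasSum_pow_div_factorial_mul_descFactorial x 2).mul_left (x ^ 2 - 8 * x + 7))).add
      ((hasSum_pow_div_factorial_mul_descFactorial x 1).mul_left (3 * x ^ 2 - 4 * x + 1))).add
      ((hasSum_pow_div_factorial_mul_descFactorial x 0).mul_left (x ^ 2))).mul_left (exp (-x))
  have hexp : exp (-x) * exp x = 1 := by rw [← exp_add, neg_add_cancel, exp_zero]
  rw [integral_poissonMeasure]
  convert hmoments.tsum_eq using 1
  · refine tsum_congr fun n ↦ ?_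
    rw [smul_eq_mul, hexpand]
    ring
  · linear_combination -(x + 4 * x ^ 2 + x ^ 3) * hexp

/-- For `X ~ Poisson(θT)` with `θ > 0`, `T ≥ 0`, the variance of the Girsanov
estimator `s = (1/θ)·X·(X − θT)` equals `(T + 4θT² + θ²T³)/θ`; since the
estimator has mean `T`, this is `E[(X(X − θT)/θ − T)²] = (T + 4θT² + θ²T³)/θ`. -/
theorem girsanov_estimator_variance (θ T : ℝ) (hθ : 0 < θ) (hT : 0 ≤ T) :
    ∫ n : ℕ, ((n : ℝ) * ((n : ℝ) - θ * T) / θ - T) ^ 2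
      ∂(poissonMeasure (θ * T).toNNReal)
      = (T + 4 * θ * T ^ 2 + θ ^ 2 * T ^ 3) / θ := by
  have hr : ((θ * T).toNNReal : ℝ) = θ * T := Real.coe_toNNReal _ (by positivity)
  calc ∫ n : ℕ, ((n : ℝ) * ((n : ℝ) - θ * T) / θ - T) ^ 2 ∂Po((θ * T).toNNReal)
      = (∫ n : ℕ, ((n : ℝ) * (n - (θ * T).toNNReal) - (θ * T).toNNReal) ^ 2
          ∂Po((θ * T).toNNReal)) / θ ^ 2 := by
        rw [← integral_div, hr]
        congr with n
        field_simp
    _ = (T + 4 * θ * T ^ 2 + θ ^ 2 * T ^ 3) / θ := by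
        rw [integral_sq_mul_sub_sub_poissonMeasure, hr]
        field_simp
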